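/- For the complex C of the torus knot T_{3,4} defined below, the homology H_*(B⁺) and each homology H_*(A⁺_s) (s ∈ ℤ) are isomorphic to T as ℤ[U]-modules. Moreover, these isomorphisms can be chosen so that for every integer s, the maps induced on homology by h⁺_s : A⁺_s → B⁺ and by v⁺_{−s} : A⁺_{−s} → B⁺ are both equal to: multiplication by U³ if s = 2; multiplication by U² if s = 1; multiplication by U if s ∈ {0, −1, −2}; and the identity if s < −2. -/

import Mathlib

noncomputable section

/-- Basis elements `y_{l,m}` of the knot Floer complex `C` of the torus knot `T_{3,4}`:
`l ∈ {1,…,5}` (as `Fin 5`, zero-indexed) and `m ∈ ℤ` (the power of `U`). -/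
abbrev CBase : Type := Fin 5 × ℤ

/-- The complex `C` (as a `ℤ[U]`-module): the free abelian group on the basis `y_{l,m}`. -/
abbrev Cm : Type := CBase →₀ ℤ

/-- The Alexander offsets `(j₁,…,j₅) = (3,2,0,−2,−3)`;
`y_{l,m}` has filtration level `(−m, −m + j_l)`. -/
def jval : Fin 5 → ℤ := ![3, 2, 0, -2, -3]

/-- The `U`-action on `C`: `U·y_{l,m} = y_{l,m+1}`. -/
def UC : AddMonoid.End Cm :=
  Finsupp.liftAddHom fun p => Finsupp.singleAddHom (p.1, p.2 + 1)

/-- Multiplication by `U^s` (for any `s ∈ ℤ`): `y_{l,m} ↦ y_{l,m+s}`. -/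
def shiftC (s : ℤ) : AddMonoid.End Cm :=
  Finsupp.liftAddHom fun p => Finsupp.singleAddHom (p.1, p.2 + s)

/-- The chain isomorphism `C{j ≥ 0} → C{i ≥ 0}` (extended to all of `C`), induced by
`y_{l,m} ↦ y_{6−l, m−j_l}`. -/
def flipC : AddMonoid.End Cm :=
  Finsupp.liftAddHom fun p => Finsupp.singleAddHom (4 - p.1, p.2 - jval p.1)

/-- The differential on `C`: `∂y_{2,m} = y_{1,m+1} + y_{3,m}`, `∂y_{4,m} = y_{3,m+2} + y_{5,m}`,
and `∂y_{l,m} = 0` for `l ∈ {1,3,5}`. -/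
def dC : AddMonoid.End Cm :=
  Finsupp.liftAddHom fun p =>
    if p.1 = (1 : Fin 5) then
      Finsupp.singleAddHom ((0 : Fin 5), p.2 + 1) + Finsupp.singleAddHom ((2 : Fin 5), p.2)
    else if p.1 = (3 : Fin 5) then
      Finsupp.singleAddHom ((2 : Fin 5), p.2 + 2) + Finsupp.singleAddHom ((4 : Fin 5), p.2)
    else 0

/-- For a set `S` of filtration levels closed under increase, the quotient complex `C{S}` is
spanned by the generators whose filtration level lies in `S`; we model it as finitely
supported functions on the corresponding set of basis elements. -/
abbrev SubC (q : CBase → Prop) : Type := {p : CBase // q p} →₀ ℤ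

/-- The inclusion of `C{S}` into `C` (as groups). -/
def inclS (q : CBase → Prop) : SubC q →+ Cm :=
  Finsupp.liftAddHom fun p => Finsupp.singleAddHom p.1

/-- The projection of `C` onto `C{S}`, killing all other generators. -/
def projS (q : CBase → Prop) [DecidablePred q] : Cm →+ SubC q :=
  Finsupp.liftAddHom fun p =>
    if h : q p then Finsupp.singleAddHom (⟨p, h⟩ : {p : CBase // q p}) else 0

/-- The endomorphism of `C{S}` induced by an endomorphism of `C` (project after applying). -/
def endS (q : CBase → Prop) [DecidablePred q] (φ : AddMonoid.End Cm) :
    AddMonoid.End (SubC q) :=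
  (projS q).comp (φ.comp (inclS q))

/-- The basis elements of `B⁺ = C{i ≥ 0}`: those `y_{l,m}` with `−m ≥ 0`. -/
def condB : CBase → Prop := fun p => p.2 ≤ 0

instance : DecidablePred condB := fun p => inferInstanceAs (Decidable (p.2 ≤ 0))

/-- The basis elements of `A⁺_s = C{max(i, j−s) ≥ 0}`: those `y_{l,m}` with
`−m ≥ 0` or `−m + j_l − s ≥ 0`. -/
def condA (s : ℤ) : CBase → Prop := fun p => p.2 ≤ 0 ∨ p.2 ≤ jval p.1 - s

instance (s : ℤ) : DecidablePred (condA s) := fun p => instDecidableOr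

/-- The basis elements of `C{j ≥ s}`: those `y_{l,m}` with `−m + j_l − s ≥ 0`. -/
def condJ (s : ℤ) : CBase → Prop := fun p => p.2 ≤ jval p.1 - s

instance (s : ℤ) : DecidablePred (condJ s) := fun p => inferInstanceAs (Decidable (p.2 ≤ jval p.1 - s))

/-- `B⁺ = C{i ≥ 0}`. -/
abbrev Bm : Type := SubC condB

/-- `A⁺_s = C{max(i, j−s) ≥ 0}`. -/
abbrev Am (s : ℤ) : Type := SubC (condA s)

/-- The differential on `B⁺`. -/
def dB : AddMonoid.End Bm := endS condB dC

/-- The differential on `A⁺_s`. -/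
def dA (s : ℤ) : AddMonoid.End (Am s) := endS (condA s) dC

/-- The `U`-action on `B⁺`. -/
def UB : AddMonoid.End Bm := endS condB UC

/-- The `U`-action on `A⁺_s`. -/
def UA (s : ℤ) : AddMonoid.End (Am s) := endS (condA s) UC

/-- The projection `v⁺_s : A⁺_s → B⁺`. -/
def vMap (s : ℤ) : Am s →+ Bm := (projS condB).comp (inclS (condA s))

/-- Killing the generators of `C` whose `j`-filtration is `< s`. -/
def killJ (s : ℤ) : AddMonoid.End Cm := (inclS (condJ s)).comp (projS (condJ s))

/-- The map `h⁺_s : A⁺_s → B⁺`: project `A⁺_s → C{j ≥ s}`, multiply by `U^s` to reach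
`C{j ≥ 0}`, then apply the chain isomorphism `C{j ≥ 0} → C{i ≥ 0}`. -/
def hMap (s : ℤ) : Am s →+ Bm :=
  (projS condB).comp (flipC.comp ((shiftC s).comp ((killJ s).comp (inclS (condA s)))))

/-- The `ℤ[U]`-module `T = ℤ[U,U⁻¹]/(U·ℤ[U])`, modelled as `ℕ →₀ ℤ` where the value at `j`
is the coefficient of `U^{-j}`. -/
abbrev TT : Type := ℕ →₀ ℤ

/-- The `U`-action on `T`. -/
def UT : AddMonoid.End TT :=
  Finsupp.liftAddHom fun j => if j = 0 then 0 else Finsupp.singleAddHom (j - 1)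

/-- The cycles of a differential `d`. -/
def cyc {M : Type*} [AddCommGroup M] (d : AddMonoid.End M) : AddSubgroup M :=
  AddMonoidHom.ker d

/-- The homology of a complex `(M, d)`: cycles modulo boundaries. -/
def Hq {M : Type*} [AddCommGroup M] (d : AddMonoid.End M) : Type _ :=
  cyc d ⧸ ((AddMonoidHom.range d).addSubgroupOf (cyc d))

instance {M : Type*} [AddCommGroup M] (d : AddMonoid.End M) : AddCommGroup (Hq d) := by
  unfold Hq; infer_instance

/-- The homology class of a cycle. -/
def hcl {M : Type*} [AddCommGroup M] (d : AddMonoid.End M) (x : M) (hx : x ∈ cyc d) : Hq d :=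
  QuotientAddGroup.mk (⟨x, hx⟩ : cyc d)


section Infra
open Finsupp
variable {q : CBase → Prop} [DecidablePred q]

lemma incl_single (p : CBase) (hp : q p) (c : ℤ) :
    inclS q (Finsupp.single ⟨p, hp⟩ c) = Finsupp.single p c := by
  simp [inclS, Finsupp.liftAddHom_apply_single]

lemma proj_single (p : CBase) (c : ℤ) :
    projS q (Finsupp.single p c) =
      if h : q p then Finsupp.single (⟨p, h⟩ : {p // q p}) c else 0 := by
  simp only [projS, Finsupp.liftAddHom_apply_single]
  split <;> simp

lemma proj_incl (x : SubC q) : projS q (inclS q x) = x := by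
  have h : (projS q).comp (inclS q) = AddMonoidHom.id _ := by
    apply Finsupp.addHom_ext
    intro a c
    rcases a with ⟨p, hp⟩
    simp [incl_single, proj_single, hp]
  exact DFunLike.congr_fun h x

lemma incl_inj : Function.Injective (inclS q) := by
  intro x y h
  have h2 := congrArg (projS q) h
  simpa [proj_incl] using h2

lemma incl_proj (y : Cm) : inclS q (projS q y) = (inclS q).comp (projS q) y := rfl

lemma PP_single {M : Fin 5 → ℤ} (hq : ∀ p, q p ↔ p.2 ≤ M p.1) (p : CBase) (c : ℤ) :
    (inclS q) (projS q (Finsupp.single p c)) =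
      if p.2 ≤ M p.1 then Finsupp.single p c else 0 := by
  rw [proj_single]
  split
  · rw [incl_single, if_pos ((hq p).1 ‹_›)]
  · rw [map_zero, if_neg (fun h => ‹¬ q p› ((hq p).2 h))]

lemma endS_apply (φ : AddMonoid.End Cm) (x : SubC q) :
    endS q φ x = projS q (φ (inclS q x)) := rfl

lemma endS_apply' (φ : AddMonoid.End Cm) (x : SubC q) :
    @DFunLike.coe (SubC q →+ SubC q) _ _ AddMonoidHom.instFunLike (endS q φ) x =
      projS q (φ (inclS q x)) := rfl

lemma fin5_cases (l : Fin 5) : l = 0 ∨ l = 1 ∨ l = 2 ∨ l = 3 ∨ l = 4 := by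
  fin_cases l <;> simp

end Infra
section Maps
open Finsupp

lemma endLift_single {α M : Type*} [AddCommMonoid M] (f : α → M →+ (α →₀ M)) (p : α) (c : M) :
    @DFunLike.coe (AddMonoid.End (α →₀ M)) _ _ (AddMonoid.End.instFunLike _)
      (Finsupp.liftAddHom f) (Finsupp.single p c) = f p c :=
  Finsupp.liftAddHom_apply_single f p c

/-- Map to homology `T`, depending on top level `t`. -/
def phiC (t : ℤ) : Cm →+ TT :=
  Finsupp.liftAddHom fun p =>
    if p.1 = (0 : Fin 5) then
      (if p.2 ≤ t then (Finsupp.singleAddHom ((t - p.2).toNat) : ℤ →+ TT) else 0)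
    else if p.1 = (2 : Fin 5) then
      (if p.2 ≤ t - 1 then -(Finsupp.singleAddHom ((t - 1 - p.2).toNat) : ℤ →+ TT) else 0)
    else if p.1 = (4 : Fin 5) then
      (if p.2 ≤ t - 3 then (Finsupp.singleAddHom ((t - 3 - p.2).toNat) : ℤ →+ TT) else 0)
    else 0

/-- Section of `phiC`. -/
def sigC (t : ℤ) : TT →+ Cm :=
  Finsupp.liftAddHom fun j => Finsupp.singleAddHom ((0 : Fin 5), t - (j : ℤ))

/-- Contraction homotopy. -/
def KC (M : Fin 5 → ℤ) (t : ℤ) : AddMonoid.End Cm :=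
  Finsupp.liftAddHom fun p =>
    if p.1 = (0 : Fin 5) then
      (if t < p.2 then
        (Finsupp.singleAddHom ((1 : Fin 5), p.2 - 1) : ℤ →+ Cm) -
          (if p.2 - 1 ≤ M 2 then Finsupp.singleAddHom ((3 : Fin 5), p.2 - 3) else 0)
      else 0)
    else if p.1 = (2 : Fin 5) then
      (if p.2 = t ∧ t = M 2 ∧ M 2 < M 0 then
        (Finsupp.singleAddHom ((3 : Fin 5), p.2 - 2) : ℤ →+ Cm)
      else Finsupp.singleAddHom ((1 : Fin 5), p.2))
    else if p.1 = (4 : Fin 5) then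
      (Finsupp.singleAddHom ((3 : Fin 5), p.2) : ℤ →+ Cm) -
        (if p.2 + 2 ≤ M 2 then Finsupp.singleAddHom ((1 : Fin 5), p.2 + 2) else 0)
    else 0

-- evaluation lemmas
lemma dC_single0 (m : ℤ) (c : ℤ) : dC (Finsupp.single ((0:Fin 5), m) c) = 0 := by
  simp [dC, endLift_single]
lemma dC_single2 (m : ℤ) (c : ℤ) : dC (Finsupp.single ((2:Fin 5), m) c) = 0 := by
  simp [dC, endLift_single]
lemma dC_single4 (m : ℤ) (c : ℤ) : dC (Finsupp.single ((4:Fin 5), m) c) = 0 := by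
  simp [dC, endLift_single]
lemma dC_single1 (m : ℤ) (c : ℤ) :
    dC (Finsupp.single ((1:Fin 5), m) c) =
      Finsupp.single ((0:Fin 5), m+1) c + Finsupp.single ((2:Fin 5), m) c := by
  simp [dC, endLift_single]
lemma dC_single3 (m : ℤ) (c : ℤ) :
    dC (Finsupp.single ((3:Fin 5), m) c) =
      Finsupp.single ((2:Fin 5), m+2) c + Finsupp.single ((4:Fin 5), m) c := by
  simp [dC, endLift_single]

lemma UC_single (l : Fin 5) (m : ℤ) (c : ℤ) :
    UC (Finsupp.single (l, m) c) = Finsupp.single (l, m+1) c := by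
  simp [UC, endLift_single]

lemma shiftC_single (s : ℤ) (l : Fin 5) (m : ℤ) (c : ℤ) :
    shiftC s (Finsupp.single (l, m) c) = Finsupp.single (l, m+s) c := by
  simp [shiftC, endLift_single]

lemma flipC_single (l : Fin 5) (m : ℤ) (c : ℤ) :
    flipC (Finsupp.single (l, m) c) = Finsupp.single (4 - l, m - jval l) c := by
  simp [flipC, endLift_single]

lemma sigC_single (t : ℤ) (j : ℕ) (c : ℤ) :
    sigC t (Finsupp.single j c) = Finsupp.single ((0:Fin 5), t - (j:ℤ)) c := by
  simp [sigC, Finsupp.liftAddHom_apply_single]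

lemma phiC_single0 (t m c : ℤ) :
    phiC t (Finsupp.single ((0:Fin 5), m) c) =
      if m ≤ t then Finsupp.single ((t - m).toNat) c else 0 := by
  simp [phiC, Finsupp.liftAddHom_apply_single]
  split <;> simp
lemma phiC_single2 (t m c : ℤ) :
    phiC t (Finsupp.single ((2:Fin 5), m) c) =
      if m ≤ t - 1 then -Finsupp.single ((t - 1 - m).toNat) c else 0 := by
  simp [phiC, Finsupp.liftAddHom_apply_single]
  split <;> simp
lemma phiC_single4 (t m c : ℤ) :
    phiC t (Finsupp.single ((4:Fin 5), m) c) =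
      if m ≤ t - 3 then Finsupp.single ((t - 3 - m).toNat) c else 0 := by
  simp [phiC, Finsupp.liftAddHom_apply_single]
  split <;> simp
lemma phiC_single1 (t m c : ℤ) : phiC t (Finsupp.single ((1:Fin 5), m) c) = 0 := by
  simp [phiC, Finsupp.liftAddHom_apply_single]
lemma phiC_single3 (t m c : ℤ) : phiC t (Finsupp.single ((3:Fin 5), m) c) = 0 := by
  simp [phiC, Finsupp.liftAddHom_apply_single]

lemma KC_single0 (M : Fin 5 → ℤ) (t m c : ℤ) :
    KC M t (Finsupp.single ((0:Fin 5), m) c) =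
      if t < m then
        Finsupp.single ((1:Fin 5), m - 1) c -
          (if m - 1 ≤ M 2 then Finsupp.single ((3:Fin 5), m - 3) c else 0)
      else 0 := by
  simp only [KC, endLift_single]
  simp only [show ((0:Fin 5) = 0) = True by simp, if_true]
  split
  · split <;> simp
  · simp
lemma KC_single2 (M : Fin 5 → ℤ) (t m c : ℤ) :
    KC M t (Finsupp.single ((2:Fin 5), m) c) =
      if m = t ∧ t = M 2 ∧ M 2 < M 0 then Finsupp.single ((3:Fin 5), m - 2) c
      else Finsupp.single ((1:Fin 5), m) c := by
  simp only [KC, endLift_single]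
  simp only [show ((2:Fin 5) = 0) = False by simp, show ((2:Fin 5) = 2) = True by simp,
    if_false, if_true]
  split <;> simp
lemma KC_single4 (M : Fin 5 → ℤ) (t m c : ℤ) :
    KC M t (Finsupp.single ((4:Fin 5), m) c) =
      Finsupp.single ((3:Fin 5), m) c -
        (if m + 2 ≤ M 2 then Finsupp.single ((1:Fin 5), m + 2) c else 0) := by
  simp only [KC, endLift_single]
  simp only [show ((4:Fin 5) = 0) = False by simp, show ((4:Fin 5) = 2) = False by simp,
    show ((4:Fin 5) = 4) = True by simp, if_false, if_true]
  split <;> simp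
lemma KC_single1 (M : Fin 5 → ℤ) (t m c : ℤ) :
    KC M t (Finsupp.single ((1:Fin 5), m) c) = 0 := by
  simp [KC, endLift_single]
lemma KC_single3 (M : Fin 5 → ℤ) (t m c : ℤ) :
    KC M t (Finsupp.single ((3:Fin 5), m) c) = 0 := by
  simp [KC, endLift_single]

lemma UT_single (j : ℕ) (c : ℤ) :
    UT (Finsupp.single j c) = if j = 0 then 0 else Finsupp.single (j - 1) c := by
  simp only [UT, endLift_single]
  split <;> simp

lemma UT_single' (j : ℕ) (c : ℤ) :
    @DFunLike.coe (TT →+ TT) _ _ AddMonoidHom.instFunLike UT (Finsupp.single j c) =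
      if j = 0 then 0 else Finsupp.single (j - 1) c := UT_single j c

lemma UT_pow_single (k : ℕ) (j : ℕ) (c : ℤ) :
    (UT ^ k) (Finsupp.single j c) = if k ≤ j then Finsupp.single (j - k) c else 0 := by
  induction k generalizing j with
  | zero => simp [AddMonoid.End.one_apply]
  | succ n ih =>
    rw [pow_succ, show ((UT ^ n * UT) (Finsupp.single j c)) = (UT ^ n) (UT (Finsupp.single j c))
      from rfl, UT_single]
    split
    · rw [map_zero, if_neg (by omega)]
    · rw [ih]
      split
      · rw [if_pos (by omega)]; congr 1; omega
      · rw [if_neg (by omega)]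


lemma UT_pow_single' (k : ℕ) (j : ℕ) (c : ℤ) :
    @DFunLike.coe (TT →+ TT) _ _ AddMonoidHom.instFunLike (UT ^ k) (Finsupp.single j c) =
      if k ≤ j then Finsupp.single (j - k) c else 0 := UT_pow_single k j c

lemma compE_apply {A N : Type*} [AddZeroClass A] [AddZeroClass N] (f : AddMonoid.End N)
    (g : A →+ N) (x : A) : (AddMonoidHom.comp f g) x = f (g x) := rfl

lemma compE_apply' {A N : Type*} [AddZeroClass A] [AddZeroClass N] (g : A →+ N)
    (f : AddMonoid.End A) (x : A) : (g.comp f) x = g (f x) := rfl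

end Maps
section Gen
variable {M : Type*} [AddCommGroup M]

lemma genIso (d : AddMonoid.End M) (φ : M →+ TT) (σ : TT →+ M) (K : M →+ M)
    (h1 : ∀ x, φ (d x) = 0) (h2 : ∀ u, φ (σ u) = u) (h3 : ∀ u, d (σ u) = 0)
    (h4 : ∀ x, x = σ (φ x) + d (K x) + K (d x)) :
    ∃ e : Hq d ≃+ TT, ∀ x hx, e (hcl d x hx) = φ x := by
  have hker : ∀ x ∈ (AddMonoidHom.range (d : M →+ M)).addSubgroupOf (cyc d),
      (φ.comp (cyc d).subtype) x = 0 := by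
    rintro ⟨x, hx⟩ hmem
    rw [AddSubgroup.mem_addSubgroupOf] at hmem
    obtain ⟨y, hy⟩ := hmem
    simp only [compE_apply, compE_apply', AddMonoidHom.comp_apply, AddSubgroup.coe_subtype]
    have hy' : d y = x := hy
    rw [← hy']
    exact h1 y
  set F : Hq d →+ TT := QuotientAddGroup.lift _ (φ.comp (cyc d).subtype) hker with hF
  have hσcyc : ∀ u : TT, σ u ∈ cyc d := fun u => h3 u
  set σ' : TT →+ cyc d := σ.codRestrict _ hσcyc with hσ'
  set G : TT →+ Hq d := (QuotientAddGroup.mk' _).comp σ' with hG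
  have hFG : ∀ u, F (G u) = u := by
    intro u
    simp only [hG, AddMonoidHom.comp_apply, QuotientAddGroup.mk'_apply]
    show (φ.comp (cyc d).subtype) (σ' u) = u
    simpa [hσ'] using h2 u
  have hGF : ∀ z : Hq d, G (F z) = z := by
    intro z
    refine QuotientAddGroup.induction_on z ?_
    rintro ⟨x, hx⟩
    have hx0 : d x = 0 := hx
    show QuotientAddGroup.mk (σ' (φ x)) = QuotientAddGroup.mk _
    rw [QuotientAddGroup.eq]
    have h := h4 x
    rw [hx0, map_zero, add_zero] at h
    have key : d (K x) = -(σ (φ x)) + x := eq_neg_add_iff_add_eq.mpr h.symm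
    rw [AddSubgroup.mem_addSubgroupOf]
    exact ⟨K x, by simp [hσ']; exact key⟩
  refine ⟨{ toFun := F, invFun := G, left_inv := hGF, right_inv := hFG,
            map_add' := F.map_add }, ?_⟩
  intro x hx
  show F (QuotientAddGroup.mk ⟨x, hx⟩) = φ x
  rfl
end Gen
section Abs
variable {q : CBase → Prop} [DecidablePred q] {M : Fin 5 → ℤ} {t : ℤ}

lemma G3 (hq : ∀ p, q p ↔ p.2 ≤ M p.1) (h6 : t ≤ M 0) (u : TT) :
    endS q dC ((projS q) (sigC t u)) = 0 := by
  have main : (AddMonoidHom.comp (endS q dC) ((projS q).comp (sigC t))) = 0 := by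
    apply Finsupp.addHom_ext
    intro j b
    apply incl_inj (q := q)
    simp only [compE_apply, compE_apply', AddMonoidHom.comp_apply, AddMonoidHom.zero_apply, map_zero,
      endS_apply, endS_apply', sigC_single]
    rw [PP_single hq]
    split
    · rw [dC_single0]; simp
    · rw [map_zero, map_zero, map_zero]
  exact DFunLike.congr_fun main u

lemma G2 (hq : ∀ p, q p ↔ p.2 ≤ M p.1) (h6 : t ≤ M 0) (u : TT) :
    phiC t (inclS q ((projS q) (sigC t u))) = u := by
  have main : ((phiC t).comp ((inclS q).comp ((projS q).comp (sigC t)))) =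
      AddMonoidHom.id TT := by
    apply Finsupp.addHom_ext
    intro j b
    simp only [compE_apply, compE_apply', AddMonoidHom.comp_apply, AddMonoidHom.id_apply, sigC_single]
    rw [PP_single hq]
    rw [if_pos (by simp; omega)]
    rw [phiC_single0, if_pos (by omega)]
    congr 1
    omega
  exact DFunLike.congr_fun main u

lemma G1 (hq : ∀ p, q p ↔ p.2 ≤ M p.1)
    (h5 : M 2 ≤ t) (h6 : t ≤ M 0) (h7 : t ≤ M 2 + 1) (h10 : t ≤ M 4 + 3)
    (x : SubC q) : phiC t (inclS q (endS q dC x)) = 0 := by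
  have main : ((phiC t).comp ((inclS q).comp (endS q dC))) = 0 := by
    apply Finsupp.addHom_ext
    rintro ⟨⟨l, m⟩, hp⟩ b
    have hm : m ≤ M l := (hq _).1 hp
    simp only [compE_apply, compE_apply', AddMonoidHom.comp_apply, AddMonoidHom.zero_apply, endS_apply, endS_apply',
      incl_single]
    rcases fin5_cases l with rfl | rfl | rfl | rfl | rfl
    · rw [dC_single0]; simp
    · rw [dC_single1, map_add, map_add, PP_single hq, PP_single hq]
      simp only [map_add, apply_ite (phiC t), map_zero, phiC_single0, phiC_single2]
      split_ifs <;>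
        first
          | rfl
          | omega
          | (exfalso; omega)
          | simp
          | (rw [show ((t - (m+1)).toNat) = ((t - 1 - m).toNat) from by omega]; abel)
    · rw [dC_single2]; simp
    · rw [dC_single3, map_add, map_add, PP_single hq, PP_single hq]
      simp only [map_add, apply_ite (phiC t), map_zero, phiC_single2, phiC_single4]
      split_ifs <;>
        first
          | rfl
          | omega
          | (exfalso; omega)
          | simp
          | (rw [show ((t - 1 - (m+2)).toNat) = ((t - 3 - m).toNat) from by omega]; abel)
    · rw [dC_single4]; simp
  exact DFunLike.congr_fun main x

lemma tsc {X Y : ℕ} (b : ℤ) (h : X = Y) : (Finsupp.single X b : TT) = Finsupp.single Y b := by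
  rw [h]

lemma G5 (hq : ∀ p, q p ↔ p.2 ≤ M p.1)
    (h5 : M 2 ≤ t) (h6 : t ≤ M 0) (h7 : t ≤ M 2 + 1) (h10 : t ≤ M 4 + 3)
    (x : SubC q) : phiC t (inclS q (endS q UC x)) = UT (phiC t (inclS q x)) := by
  have main : ((phiC t).comp ((inclS q).comp (endS q UC))) =
      AddMonoidHom.comp UT ((phiC t).comp (inclS q)) := by
    apply Finsupp.addHom_ext
    rintro ⟨⟨l, m⟩, hp⟩ b
    have hm : m ≤ M l := (hq _).1 hp
    simp only [compE_apply, compE_apply', AddMonoidHom.comp_apply, endS_apply, endS_apply', incl_single, UC_single]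
    rw [PP_single hq]
    rcases fin5_cases l with rfl | rfl | rfl | rfl | rfl <;>
      simp only [phiC_single0, phiC_single1, phiC_single2, phiC_single3, phiC_single4,
        map_zero, map_neg, apply_ite (phiC t)] <;>
      try split_ifs
    all_goals
      try simp only [UT_single, UT_single', map_zero, neg_zero, map_neg]
    all_goals try split_ifs
    all_goals
      first
        | rfl
        | omega
        | (exfalso; omega)
        | (exact tsc b (by omega))
        | (exact (tsc b (by omega)).symm)
        | (exact congrArg Neg.neg (tsc b (by omega)))
        | (exact (congrArg Neg.neg (tsc b (by omega))).symm)
        | simp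
        | (exfalso; revert hm; omega)
  exact DFunLike.congr_fun main x

lemma cscm (l : Fin 5) (X Y b : ℤ) (h : X = Y) :
    (Finsupp.single (l, X) b : Cm) = Finsupp.single (l, Y) b := by rw [h]

lemma zn1 (a : ℤ) : a - 1 + 1 = a := by ring
lemma zn2 (a : ℤ) : a - 3 + 2 = a - 1 := by ring
lemma zn3 (a : ℤ) : a - 2 + 2 = a := by ring
lemma zn5 (a : ℤ) : a + 2 + 1 = a + 3 := by ring
lemma zn6 (a : ℤ) : a + 1 - 1 = a := by ring
lemma zn7 (a : ℤ) : a + 1 - 3 = a - 2 := by ring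
lemma zn8 (a : ℤ) : a + 2 - 2 = a := by ring

lemma G4 (hq : ∀ p, q p ↔ p.2 ≤ M p.1)
    (h1 : M 4 ≤ M 3) (h2 : M 3 ≤ M 2) (h3 : M 2 ≤ M 1) (h4 : M 1 ≤ M 0)
    (h5 : M 2 ≤ t) (h6 : t ≤ M 0) (h7 : t ≤ M 2 + 1) (h8 : M 0 ≤ M 1 + 1)
    (h9 : t = M 2 → M 2 < M 0 → M 3 = t - 2 ∧ M 4 = t - 3)
    (h11 : M 2 ≤ t - 1 ∨ M 0 ≤ t ∨ (M 4 = t - 3 ∧ M 2 = t))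
    (h12 : M 1 < M 0 ∨ M 1 ≤ M 2)
    (h13 : M 4 < M 3 → M 3 = t - 2 ∧ M 2 = t ∧ M 4 = t - 3 ∧ M 2 < M 0)
    (x : SubC q) :
    x = (projS q) (sigC t (phiC t (inclS q x))) + endS q dC (endS q (KC M t) x)
      + endS q (KC M t) (endS q dC x) := by
  have hfacts : (M 4 = M 3) ∨ (M 3 = t - 2 ∧ M 2 = t ∧ M 4 = t - 3 ∧ M 2 < M 0) := by
    rcases eq_or_lt_of_le h1 with e | l
    · exact Or.inl e
    · exact Or.inr (h13 l)
  have hfacts9 : ¬ (t = M 2 ∧ M 2 < M 0) ∨ (M 3 = t - 2 ∧ M 4 = t - 3) := by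
    by_cases h' : t = M 2 ∧ M 2 < M 0
    · exact Or.inr (h9 h'.1 h'.2)
    · exact Or.inl h'
  have main : inclS q = (inclS q).comp
      (((projS q).comp ((sigC t).comp ((phiC t).comp (inclS q)))) +
        AddMonoidHom.comp (endS q dC) (endS q (KC M t)) +
        AddMonoidHom.comp (endS q (KC M t)) (endS q dC)) := by
    apply Finsupp.addHom_ext
    rintro ⟨⟨l, m⟩, hp⟩ b
    have hm : m ≤ M l := (hq _).1 hp
    erw [AddMonoidHom.comp_apply, AddMonoidHom.add_apply, AddMonoidHom.add_apply, compE_apply,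
      compE_apply]
    simp only [compE_apply, AddMonoidHom.comp_apply, AddMonoidHom.add_apply, map_add,
      endS_apply, endS_apply', incl_single]
    rcases fin5_cases l with rfl | rfl | rfl | rfl | rfl <;>
      simp only [phiC_single0, phiC_single1, phiC_single2, phiC_single3, phiC_single4,
        KC_single0, KC_single1, KC_single2, KC_single3, KC_single4,
        dC_single0, dC_single1, dC_single2, dC_single3, dC_single4,
        sigC_single, PP_single hq, map_add, map_sub, map_zero, map_neg,
        add_zero, zero_add, sub_zero, neg_zero, zn1, zn2, zn3, zn5, zn6, zn7, zn8] <;>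
      try split_ifs
    all_goals try simp only [phiC_single0, phiC_single1, phiC_single2, phiC_single3,
      phiC_single4, KC_single0, KC_single1, KC_single2, KC_single3, KC_single4,
      dC_single0, dC_single1, dC_single2, dC_single3, dC_single4,
      sigC_single, PP_single hq, map_add, map_sub, map_zero, map_neg,
      add_zero, zero_add, sub_zero, neg_zero, zn1, zn2, zn3, zn5, zn6, zn7, zn8]
    all_goals try split_ifs
    all_goals try simp only [phiC_single0, phiC_single1, phiC_single2, phiC_single3,
      phiC_single4, KC_single0, KC_single1, KC_single2, KC_single3, KC_single4,
      dC_single0, dC_single1, dC_single2, dC_single3, dC_single4,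
      sigC_single, PP_single hq, map_add, map_sub, map_zero, map_neg,
      add_zero, zero_add, sub_zero, neg_zero, zn1, zn2, zn3, zn5, zn6, zn7, zn8]
    all_goals try split_ifs
    all_goals try simp only [phiC_single0, phiC_single1, phiC_single2, phiC_single3,
      phiC_single4, KC_single0, KC_single1, KC_single2, KC_single3, KC_single4,
      dC_single0, dC_single1, dC_single2, dC_single3, dC_single4,
      sigC_single, PP_single hq, map_add, map_sub, map_zero, map_neg,
      add_zero, zero_add, sub_zero, neg_zero, zn1, zn2, zn3, zn5, zn6, zn7, zn8]
    all_goals try split_ifs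
    all_goals try simp only [phiC_single0, phiC_single1, phiC_single2, phiC_single3,
      phiC_single4, KC_single0, KC_single1, KC_single2, KC_single3, KC_single4,
      dC_single0, dC_single1, dC_single2, dC_single3, dC_single4,
      sigC_single, PP_single hq, map_add, map_sub, map_zero, map_neg,
      add_zero, zero_add, sub_zero, neg_zero, zn1, zn2, zn3, zn5, zn6, zn7, zn8]
    all_goals
      first
        | rfl
        | omega
        | (exfalso; omega)
        | abel1
        | (rw [show t - (((t - m).toNat : ℕ) : ℤ) = m from by omega]; abel1)
        | (rw [show t - (((t - 1 - m).toNat : ℕ) : ℤ) = m + 1 from by omega]; abel1)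
        | (rw [show t - (((t - 3 - m).toNat : ℕ) : ℤ) = m + 3 from by omega]; abel1)
        | (exact cscm _ _ _ b (by omega))
        | (exact (cscm _ _ _ b (by omega)).symm)
        | simp
        | (simp; omega)
        | (simp only [Int.ofNat_toNat]; first
            | (exact cscm _ _ _ b (by omega))
            | (exact (cscm _ _ _ b (by omega)).symm))
  have hx := DFunLike.congr_fun main x
  erw [AddMonoidHom.comp_apply, AddMonoidHom.add_apply, AddMonoidHom.add_apply, compE_apply,
    compE_apply] at hx
  apply incl_inj (q := q)
  rw [map_add, map_add] at hx ⊢; exact hx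

end Abs
section HV

lemma hq0 : ∀ p : CBase, condB p ↔ p.2 ≤ (fun _ : Fin 5 => (0:ℤ)) p.1 := fun _ => Iff.rfl

lemma hqJ (s : ℤ) : ∀ p : CBase, condJ s p ↔ p.2 ≤ (fun l => jval l - s) p.1 :=
  fun _ => Iff.rfl

lemma jval0 : jval 0 = 3 := rfl
lemma jval1 : jval 1 = 2 := rfl
lemma jval2 : jval 2 = 0 := rfl
lemma jval3 : jval 3 = -2 := rfl
lemma jval4 : jval 4 = -3 := rfl
lemma fsub0 : (4:Fin 5) - 0 = 4 := by decide
lemma fsub1 : (4:Fin 5) - 1 = 3 := by decide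
lemma fsub2 : (4:Fin 5) - 2 = 2 := by decide
lemma fsub3 : (4:Fin 5) - 3 = 1 := by decide
lemma fsub4 : (4:Fin 5) - 4 = 0 := by decide

lemma S7 (u : ℤ) (t' : ℤ) (k : ℕ) (hk : (k:ℤ) = t') (x : Am u) :
    phiC 0 (inclS condB (vMap u x)) = (UT ^ k) (phiC t' (inclS (condA u) x)) := by
  have main : ((phiC 0).comp ((inclS condB).comp (vMap u))) =
      AddMonoidHom.comp (UT ^ k) ((phiC t').comp (inclS (condA u))) := by
    apply Finsupp.addHom_ext
    rintro ⟨⟨l, m⟩, hp⟩ b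
    simp only [compE_apply, compE_apply', AddMonoidHom.comp_apply, vMap, incl_single]
    rw [PP_single (M := fun _ => (0:ℤ)) hq0]
    rcases fin5_cases l with rfl | rfl | rfl | rfl | rfl <;>
      simp only [phiC_single0, phiC_single1, phiC_single2, phiC_single3, phiC_single4,
        map_zero, map_neg, apply_ite (phiC 0), apply_ite (phiC t'), map_zero] <;>
      try split_ifs
    all_goals try simp only [UT_pow_single, UT_pow_single', map_zero, map_neg, neg_zero]
    all_goals try split_ifs
    all_goals
      first
        | rfl
        | omega
        | (exfalso; omega)
        | (exact tsc b (by omega))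
        | (exact (tsc b (by omega)).symm)
        | (exact congrArg Neg.neg (tsc b (by omega)))
        | (exact (congrArg Neg.neg (tsc b (by omega))).symm)
        | simp
  exact DFunLike.congr_fun main x

lemma S6 (s : ℤ) (t' : ℤ) (k : ℕ) (hk : (k:ℤ) = t' + s) (x : Am s) :
    phiC 0 (inclS condB (hMap s x)) = (UT ^ k) (phiC t' (inclS (condA s) x)) := by
  have main : ((phiC 0).comp ((inclS condB).comp (hMap s))) =
      AddMonoidHom.comp (UT ^ k) ((phiC t').comp (inclS (condA s))) := by
    apply Finsupp.addHom_ext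
    rintro ⟨⟨l, m⟩, hp⟩ b
    simp only [↓compE_apply, AddMonoidHom.comp_apply, hMap, killJ, incl_single]
    rw [PP_single (M := fun l => jval l - s) (hqJ s)]
    rcases fin5_cases l with rfl | rfl | rfl | rfl | rfl <;>
      rw [apply_ite (shiftC s)] <;>
      simp only [map_zero, apply_ite (shiftC s), apply_ite flipC,
        apply_ite (projS condB), apply_ite (inclS condB), apply_ite (phiC 0),
        shiftC_single, flipC_single, jval0, jval1, jval2, jval3, jval4,
        fsub0, fsub1, fsub2, fsub3, fsub4, map_zero] <;>
      (try rw [PP_single (M := fun _ => (0:ℤ)) hq0]) <;>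
      try simp only [phiC_single0, phiC_single1, phiC_single2, phiC_single3, phiC_single4,
        apply_ite (phiC 0), apply_ite (phiC t'), map_zero, map_neg, neg_zero] <;>
      try split_ifs
    all_goals try simp only [UT_pow_single, UT_pow_single', map_zero, map_neg, neg_zero]
    all_goals try split_ifs
    all_goals
      first
        | rfl
        | omega
        | (exfalso; omega)
        | (exact tsc b (by omega))
        | (exact (tsc b (by omega)).symm)
        | (exact congrArg Neg.neg (tsc b (by omega)))
        | (exact (congrArg Neg.neg (tsc b (by omega))).symm)
        | simp
  exact DFunLike.congr_fun main x

end HV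
section Final

/-- top generator level of `H(A_s)` -/
def tval (s : ℤ) : ℤ :=
  if 3 ≤ s then 0 else if 0 ≤ s then 1 else if s = -1 then 2 else if s = -2 then 3 else -s

/-- filtration bounds of `A_s` -/
def MA (s : ℤ) : Fin 5 → ℤ := fun l => max 0 (jval l - s)

lemma MA_0 (s : ℤ) : MA s 0 = max 0 (3 - s) := rfl
lemma MA_1 (s : ℤ) : MA s 1 = max 0 (2 - s) := rfl
lemma MA_2 (s : ℤ) : MA s 2 = max 0 (0 - s) := rfl
lemma MA_3 (s : ℤ) : MA s 3 = max 0 (-2 - s) := rfl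
lemma MA_4 (s : ℤ) : MA s 4 = max 0 (-3 - s) := rfl

lemma hqA (s : ℤ) : ∀ p, condA s p ↔ p.2 ≤ MA s p.1 := by
  rintro ⟨l, m⟩
  simp [condA, MA, le_max_iff]

lemma hA1 (s : ℤ) : MA s 4 ≤ MA s 3 := by rw [MA_4, MA_3]; omega
lemma hA2 (s : ℤ) : MA s 3 ≤ MA s 2 := by rw [MA_3, MA_2]; omega
lemma hA3 (s : ℤ) : MA s 2 ≤ MA s 1 := by rw [MA_2, MA_1]; omega
lemma hA4 (s : ℤ) : MA s 1 ≤ MA s 0 := by rw [MA_1, MA_0]; omega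
lemma hA5 (s : ℤ) : MA s 2 ≤ tval s := by rw [MA_2]; unfold tval; split_ifs <;> omega
lemma hA6 (s : ℤ) : tval s ≤ MA s 0 := by rw [MA_0]; unfold tval; split_ifs <;> omega
lemma hA7 (s : ℤ) : tval s ≤ MA s 2 + 1 := by rw [MA_2]; unfold tval; split_ifs <;> omega
lemma hA8 (s : ℤ) : MA s 0 ≤ MA s 1 + 1 := by rw [MA_0, MA_1]; omega
lemma hA9 (s : ℤ) : tval s = MA s 2 → MA s 2 < MA s 0 →
    MA s 3 = tval s - 2 ∧ MA s 4 = tval s - 3 := by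
  rw [MA_0, MA_2, MA_3, MA_4]; unfold tval; split_ifs <;> (intros; omega)
lemma hA10 (s : ℤ) : tval s ≤ MA s 4 + 3 := by
  rw [MA_4]; unfold tval; split_ifs <;> omega
lemma hA11 (s : ℤ) : MA s 2 ≤ tval s - 1 ∨ MA s 0 ≤ tval s ∨
    (MA s 4 = tval s - 3 ∧ MA s 2 = tval s) := by
  rw [MA_0, MA_2, MA_4]; unfold tval; split_ifs <;> omega
lemma hA12 (s : ℤ) : MA s 1 < MA s 0 ∨ MA s 1 ≤ MA s 2 := by
  rw [MA_0, MA_1, MA_2]; omega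
lemma hA13 (s : ℤ) : MA s 4 < MA s 3 →
    MA s 3 = tval s - 2 ∧ MA s 2 = tval s ∧ MA s 4 = tval s - 3 ∧ MA s 2 < MA s 0 := by
  rw [MA_0, MA_2, MA_3, MA_4]; unfold tval; split_ifs <;> (intros; omega)

lemma tval_2 : tval 2 = 1 := by norm_num [tval]
lemma tval_1 : tval 1 = 1 := by norm_num [tval]
lemma tval_0 : tval 0 = 1 := by norm_num [tval]
lemma tval_n1 : tval (-1) = 2 := by norm_num [tval]
lemma tval_n2 : tval (-2) = 3 := by norm_num [tval]
lemma tval_big (s : ℤ) (h : 3 ≤ s) : tval s = 0 := by unfold tval; split_ifs <;> omega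
lemma tval_small (s : ℤ) (h : s < -2) : tval s = -s := by unfold tval; split_ifs <;> omega

lemma hB0 (l : Fin 5) : (fun _ : Fin 5 => (0:ℤ)) l = 0 := rfl

end Final
set_option maxHeartbeats 1000000 in
/-- For the knot Floer complex of the torus knot `T_{3,4}`: the homologies `H_*(B⁺)` and
`H_*(A⁺_s)` (for every `s ∈ ℤ`) are isomorphic to `T` as `ℤ[U]`-modules, and the
identifications can be chosen so that for every `s`, the maps induced on homology by
`h⁺_s : A⁺_s → B⁺` and by `v⁺_{−s} : A⁺_{−s} → B⁺` are both multiplication by `U³` if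
`s = 2`, by `U²` if `s = 1`, by `U` if `s ∈ {0,−1,−2}`, and the identity if `s < −2`. -/
theorem stmt13 :
    ∃ (eB : Hq dB ≃+ TT) (eA : ∀ s : ℤ, Hq (dA s) ≃+ TT),
      (∀ (x : Bm) (hx : x ∈ cyc dB) (hUx : UB x ∈ cyc dB),
        eB (hcl dB (UB x) hUx) = UT (eB (hcl dB x hx))) ∧
      (∀ (s : ℤ) (x : Am s) (hx : x ∈ cyc (dA s)) (hUx : UA s x ∈ cyc (dA s)),
        eA s (hcl (dA s) (UA s x) hUx) = UT (eA s (hcl (dA s) x hx))) ∧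
      (∀ (s : ℤ) (e : AddMonoid.End TT),
        ((s = 2 ∧ e = UT ^ 3) ∨ (s = 1 ∧ e = UT ^ 2) ∨
          ((s = 0 ∨ s = -1 ∨ s = -2) ∧ e = UT) ∨ (s < -2 ∧ e = 1)) →
        (∀ (x : Am s) (hx : x ∈ cyc (dA s)) (hhx : hMap s x ∈ cyc dB),
          eB (hcl dB (hMap s x) hhx) = e (eA s (hcl (dA s) x hx))) ∧
        (∀ (x : Am (-s)) (hx : x ∈ cyc (dA (-s))) (hvx : vMap (-s) x ∈ cyc dB),
          eB (hcl dB (vMap (-s) x) hvx) = e (eA (-s) (hcl (dA (-s)) x hx)))) := by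
  -- construct eB
  obtain ⟨eB, heB⟩ := genIso dB ((phiC 0).comp (inclS condB))
    ((projS condB).comp (sigC 0)) (endS condB (KC (fun _ => 0) 0))
    (fun x => G1 (q := condB) (M := fun _ => (0:ℤ)) (t := (0:ℤ)) hq0 le_rfl le_rfl
      (by norm_num) (by norm_num) x)
    (fun u => G2 (q := condB) (M := fun _ => (0:ℤ)) (t := (0:ℤ)) hq0 le_rfl u)
    (fun u => G3 (q := condB) (M := fun _ => (0:ℤ)) (t := (0:ℤ)) hq0 le_rfl u)
    (fun x => G4 (q := condB) (M := fun _ => (0:ℤ)) (t := (0:ℤ)) hq0 le_rfl le_rfl le_rfl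
      le_rfl le_rfl le_rfl (by norm_num) (by norm_num)
      (fun _ h => absurd h (by norm_num)) (Or.inr (Or.inl (by norm_num)))
      (Or.inr (by norm_num)) (fun h => absurd h (by norm_num)) x)
  have eAex : ∀ s : ℤ, ∃ e : Hq (dA s) ≃+ TT,
      ∀ x hx, e (hcl (dA s) x hx) = (phiC (tval s)) (inclS (condA s) x) := fun s =>
    genIso (dA s) ((phiC (tval s)).comp (inclS (condA s)))
      ((projS (condA s)).comp (sigC (tval s))) (endS (condA s) (KC (MA s) (tval s)))
      (fun x => G1 (q := condA s) (M := MA s) (t := tval s) (hqA s) (hA5 s) (hA6 s) (hA7 s) (hA10 s) x)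
      (fun u => G2 (q := condA s) (M := MA s) (t := tval s) (hqA s) (hA6 s) u)
      (fun u => G3 (q := condA s) (M := MA s) (t := tval s) (hqA s) (hA6 s) u)
      (fun x => G4 (q := condA s) (M := MA s) (t := tval s) (hqA s) (hA1 s) (hA2 s) (hA3 s) (hA4 s) (hA5 s) (hA6 s) (hA7 s) (hA8 s)
        (hA9 s) (hA11 s) (hA12 s) (hA13 s) x)
  choose eA heA using eAex
  refine ⟨eB, eA, ?_, ?_, ?_⟩
  · intro x hx hUx
    rw [heB _ hUx, heB _ hx]
    exact G5 (q := condB) (M := fun _ => (0:ℤ)) (t := (0:ℤ)) hq0 le_rfl le_rfl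
      (by norm_num) (by norm_num) x
  · intro s x hx hUx
    rw [heA s _ hUx, heA s _ hx]
    exact G5 (q := condA s) (M := MA s) (t := tval s) (hqA s) (hA5 s) (hA6 s) (hA7 s) (hA10 s) x
  · intro s e hdisj
    have hS6 : ∀ (k : ℕ), (k : ℤ) = tval s + s → e = UT ^ k →
        (∀ (x : Am s) (hx : x ∈ cyc (dA s)) (hhx : hMap s x ∈ cyc dB),
          eB (hcl dB (hMap s x) hhx) = e (eA s (hcl (dA s) x hx))) := by
      intro k hk he x hx hhx
      rw [heB _ hhx, heA s _ hx, he]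
      exact S6 s (tval s) k hk x
    have hS7 : ∀ (k : ℕ), (k : ℤ) = tval (-s) → e = UT ^ k →
        (∀ (x : Am (-s)) (hx : x ∈ cyc (dA (-s))) (hvx : vMap (-s) x ∈ cyc dB),
          eB (hcl dB (vMap (-s) x) hvx) = e (eA (-s) (hcl (dA (-s)) x hx))) := by
      intro k hk he x hx hvx
      rw [heB _ hvx, heA (-s) _ hx, he]
      exact S7 (-s) (tval (-s)) k hk x
    rcases hdisj with ⟨rfl, rfl⟩ | ⟨rfl, rfl⟩ | ⟨hs, rfl⟩ | ⟨hs, rfl⟩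
    · exact ⟨hS6 3 (by rw [tval_2]; norm_num) rfl,
        hS7 3 (by norm_num; rw [tval_n2]) rfl⟩
    · exact ⟨hS6 2 (by rw [tval_1]; norm_num) rfl,
        hS7 2 (by norm_num; rw [tval_n1]) rfl⟩
    · rcases hs with rfl | rfl | rfl
      · exact ⟨hS6 1 (by rw [tval_0]; norm_num) (pow_one UT).symm,
          hS7 1 (by norm_num; rw [tval_0]) (pow_one UT).symm⟩
      · exact ⟨hS6 1 (by rw [tval_n1]; norm_num) (pow_one UT).symm,
          hS7 1 (by norm_num; rw [tval_1]) (pow_one UT).symm⟩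
      · exact ⟨hS6 1 (by rw [tval_n2]; norm_num) (pow_one UT).symm,
          hS7 1 (by norm_num; rw [tval_2]) (pow_one UT).symm⟩
    · exact ⟨hS6 0 (by rw [tval_small s hs]; norm_num) (pow_zero UT).symm,
        hS7 0 (by rw [tval_big (-s) (by omega)]; norm_num) (pow_zero UT).symm⟩
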